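/- Assume n = 2 and m = 3. A voting rule is regret-free truth-telling and neutral if and only if it is an N-maxmin rule or a dictatorship. -/
import Mathlib


open Function

/-- A preference: a bijection from positions (`0` = bottom/worst, `m-1` = top/best)
to alternatives.  `p k` is the alternative in the `(k+1)`-th position from the bottom. -/
abbrev Pref (m : ℕ) := Equiv.Perm (Fin m)

/-- A profile: one preference for each of the `n` agents. -/
abbrev Profile (n m : ℕ) := Fin n → Pref m

/-- `x` is strictly preferred to `y` under `p`. -/
def prefers {m : ℕ} (p : Pref m) (x y : Fin m) : Prop :=
  p.symm y < p.symm x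

instance {m : ℕ} (p : Pref m) (x y : Fin m) : Decidable (prefers p x y) :=
  inferInstanceAs (Decidable (p.symm y < p.symm x))

/-- `x` is the top (best) alternative of `p`. -/
def IsBest {m : ℕ} (p : Pref m) (x : Fin m) : Prop :=
  ∀ y, p.symm y ≤ p.symm x

instance {m : ℕ} (p : Pref m) (x : Fin m) : Decidable (IsBest p x) :=
  inferInstanceAs (Decidable (∀ y, p.symm y ≤ p.symm x))

/-- Regret-free truth-telling: whenever a misreport `Pi'` by agent `i` yields a strictly
better outcome, there is a subprofile of the others (a full profile `Pstar` agreeing with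
`P` at `i`) consistent with the observed outcome at which the misreport does strictly worse. -/
def RFTT {n m : ℕ} (f : Profile n m → Fin m) : Prop :=
  ∀ (i : Fin n) (P : Profile n m) (Pi' : Pref m),
    prefers (P i) (f (update P i Pi')) (f P) →
    ∃ Pstar : Profile n m, Pstar i = P i ∧ f Pstar = f P ∧
      prefers (P i) (f Pstar) (f (update Pstar i Pi'))

/-- Strategy-proofness: truth-telling yields a weakly better outcome. -/
def StrategyProof {n m : ℕ} (f : Profile n m → Fin m) : Prop :=
  ∀ (P : Profile n m) (i : Fin n) (Pi' : Pref m),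
    f P = f (update P i Pi') ∨ prefers (P i) (f P) (f (update P i Pi'))

/-- Tops-only: the outcome only depends on the agents' top alternatives. -/
def TopsOnly {n m : ℕ} (f : Profile n m → Fin m) : Prop :=
  ∀ P P' : Profile n m, (∀ i x, IsBest (P i) x ↔ IsBest (P' i) x) → f P = f P'

/-- Efficiency: no alternative is strictly preferred to the outcome by every agent. -/
def Efficient {n m : ℕ} (f : Profile n m → Fin m) : Prop :=
  ∀ P : Profile n m, ¬ ∃ y, ∀ i, prefers (P i) y (f P)

/-- Dictatorship: some agent always gets his top alternative. -/
def Dictatorial {n m : ℕ} (f : Profile n m → Fin m) : Prop :=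
  ∃ i : Fin n, ∀ P : Profile n m, IsBest (P i) (f P)

/-- Anonymity: invariance under permutations of the agents. -/
def Anonymous {n m : ℕ} (f : Profile n m → Fin m) : Prop :=
  ∀ (P : Profile n m) (σ : Equiv.Perm (Fin n)), f P = f (fun i => P (σ i))

/-- Neutrality: relabelling the alternatives relabels the outcome accordingly. -/
def Neutral {n m : ℕ} (f : Profile n m → Fin m) : Prop :=
  ∀ (P : Profile n m) (π : Equiv.Perm (Fin m)),
    π (f P) = f (fun i => (P i).trans π)

/-- The minimal position (`0`-indexed, from the bottom) of alternative `x` in profile `P`. -/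
noncomputable def minpos {n m : ℕ} (P : Profile n m) (x : Fin m) : ℕ :=
  ⨅ i : Fin n, ((P i).symm x : ℕ)

/-- The maxmin winners of profile `P`. -/
def MaxminSet {n m : ℕ} (P : Profile n m) : Set (Fin m) :=
  {x | ∀ y, minpos P y ≤ minpos P x}

/-- An `A`-maxmin rule: breaks ties among maxmin winners by a fixed strict linear order. -/
def AMaxmin {n m : ℕ} (f : Profile n m → Fin m) : Prop :=
  ∃ r : Fin m → Fin m → Prop, IsStrictTotalOrder (Fin m) r ∧
    ∀ P : Profile n m, f P ∈ MaxminSet P ∧ ∀ y ∈ MaxminSet P, y ≠ f P → r (f P) y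

/-- An `N`-maxmin rule: breaks ties among maxmin winners by a fixed agent's preference. -/
def NMaxmin {n m : ℕ} (f : Profile n m → Fin m) : Prop :=
  ∃ i : Fin n, ∀ P : Profile n m,
    f P ∈ MaxminSet P ∧ ∀ y ∈ MaxminSet P, y ≠ f P → prefers (P i) (f P) y

/-- The score of alternative `x` in profile `P`, for scores `s` (indexed by position
from the bottom). -/
noncomputable def score {n m : ℕ} (s : Fin m → ℝ) (P : Profile n m) (x : Fin m) : ℝ :=
  ∑ i : Fin n, s ((P i).symm x)

/-- The scoring winners of profile `P`. -/
def ScoreSet {n m : ℕ} (s : Fin m → ℝ) (P : Profile n m) : Set (Fin m) :=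
  {x | ∀ y, score s P y ≤ score s P x}

/-- An `A`-scoring rule: breaks ties among scoring winners by a fixed strict linear order. -/
def AScoring {n m : ℕ} (s : Fin m → ℝ) (f : Profile n m → Fin m) : Prop :=
  ∃ r : Fin m → Fin m → Prop, IsStrictTotalOrder (Fin m) r ∧
    ∀ P : Profile n m, f P ∈ ScoreSet s P ∧ ∀ y ∈ ScoreSet s P, y ≠ f P → r (f P) y

/-- An `N`-scoring rule: breaks ties among scoring winners by a fixed agent's preference. -/
def NScoring {n m : ℕ} (s : Fin m → ℝ) (f : Profile n m → Fin m) : Prop :=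
  ∃ i : Fin n, ∀ P : Profile n m,
    f P ∈ ScoreSet s P ∧ ∀ y ∈ ScoreSet s P, y ≠ f P → prefers (P i) (f P) y

/-- The number of agents preferring `a` to `b` in profile `P`. -/
def numPref {n m : ℕ} (P : Profile n m) (a b : Fin m) : ℕ :=
  (Finset.univ.filter fun i => prefers (P i) a b).card

/-- `a` is a Condorcet winner at `P`. -/
def CondorcetWinner {n m : ℕ} (P : Profile n m) (a : Fin m) : Prop :=
  ∀ b, b ≠ a → numPref P b a < numPref P a b

/-- Condorcet consistency: the rule picks the Condorcet winner whenever one exists. -/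
def CondorcetConsistent {n m : ℕ} (f : Profile n m → Fin m) : Prop :=
  ∀ (P : Profile n m) (a : Fin m), CondorcetWinner P a → f P = a

/-- `p'` is a monotonic transformation of `p` with respect to `a`: all positions up to
(and including) the position of `a` are unchanged. -/
def MonoTransf {m : ℕ} (p p' : Pref m) (a : Fin m) : Prop :=
  ∀ k : Fin m, k ≤ p.symm a → p k = p' k

/-- Monotonicity: an alternative ranked below the outcome by agent `i` cannot become
the outcome after a monotonic transformation of `i`'s preference w.r.t. the outcome. -/
def MonotoneRule {n m : ℕ} (f : Profile n m → Fin m) : Prop :=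
  ∀ (P : Profile n m) (i : Fin n) (b : Fin m), prefers (P i) (f P) b →
    ∀ Pi' : Pref m, MonoTransf (P i) Pi' (f P) → f (update P i Pi') ≠ b

/-- One pairwise majority contest: the challenger `y` beats the incumbent `c` only if
strictly more agents prefer `y` to `c` (ties go to the incumbent, who always comes
earlier in the fixed order). -/
def duel {n m : ℕ} (P : Profile n m) (c y : Fin m) : Fin m :=
  if numPref P c y < numPref P y c then y else c

/-- Run successive pairwise contests starting from incumbent `c` against the listed
challengers in order. -/
def seRun {n m : ℕ} (P : Profile n m) : Fin m → List (Fin m) → Fin m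
  | c, [] => c
  | c, y :: rest => seRun P (duel P c y) rest

/-- The survivor of successive elimination along a list of alternatives (none if empty). -/
def seWinner? {n m : ℕ} (P : Profile n m) : List (Fin m) → Option (Fin m)
  | [] => none
  | c :: rest => some (seRun P c rest)

/-- A successive elimination rule: there is an enumeration `e 0 ≻ e 1 ≻ ⋯ ≻ e (m-1)` of the
alternatives such that the rule outputs the survivor of the sequential pairwise majority
contests (ties resolved in favour of the `≻`-greater, i.e. earlier, alternative). -/
def SuccElim {n m : ℕ} (f : Profile n m → Fin m) : Prop :=
  ∃ e : Fin m ≃ Fin m, ∀ P : Profile n m,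
    seWinner? P ((List.finRange m).map e) = some (f P)

namespace Stmt18

def mk3 (v w : Fin 3 → Fin 3) (h1 : ∀ x, w (v x) = x) (h2 : ∀ x, v (w x) = x) : Pref 3 :=
  ⟨v, w, h1, h2⟩

def pe : Fin 6 → Pref 3 :=
  ![mk3 ![0,1,2] ![0,1,2] (by decide) (by decide),
    mk3 ![0,2,1] ![0,2,1] (by decide) (by decide),
    mk3 ![1,0,2] ![1,0,2] (by decide) (by decide),
    mk3 ![1,2,0] ![2,0,1] (by decide) (by decide),
    mk3 ![2,0,1] ![1,2,0] (by decide) (by decide),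
    mk3 ![2,1,0] ![2,1,0] (by decide) (by decide)]

def pidx (p : Pref 3) : Fin 6 :=
  ⟨2 * (p 0).val + (if (p 1).val < (p 2).val then 0 else 1),
   by have := (p 0).isLt; split <;> omega⟩

lemma pidx_pe : ∀ k : Fin 6, pidx (pe k) = k := by decide

lemma fin3cases : ∀ z : Fin 3, z = 0 ∨ z = 1 ∨ z = 2 := by decide

lemma eq_of_01 (p q : Pref 3) (h0 : p 0 = q 0) (h1 : p 1 = q 1) : p = q := by
  have key : ∀ a b x y : Fin 3, a ≠ b → x ≠ a → x ≠ b → y ≠ a → y ≠ b → x = y := by decide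
  apply Equiv.ext
  intro x
  rcases fin3cases x with rfl | rfl | rfl
  · exact h0
  · exact h1
  · exact key (p 0) (p 1) (p 2) (q 2) (p.injective.ne (by decide))
      (p.injective.ne (by decide)) (p.injective.ne (by decide))
      (h0 ▸ q.injective.ne (by decide)) (h1 ▸ q.injective.ne (by decide))

lemma exists_pe (p : Pref 3) : ∃ k : Fin 6, pe k = p := by
  have hne : p 0 ≠ p 1 := p.injective.ne (by decide)
  rcases fin3cases (p 0) with h0 | h0 | h0 <;> rcases fin3cases (p 1) with h1 | h1 | h1
  · exact absurd (h0.trans h1.symm) hne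
  · exact ⟨0, eq_of_01 _ _ (by rw [h0]; decide) (by rw [h1]; decide)⟩
  · exact ⟨1, eq_of_01 _ _ (by rw [h0]; decide) (by rw [h1]; decide)⟩
  · exact ⟨2, eq_of_01 _ _ (by rw [h0]; decide) (by rw [h1]; decide)⟩
  · exact absurd (h0.trans h1.symm) hne
  · exact ⟨3, eq_of_01 _ _ (by rw [h0]; decide) (by rw [h1]; decide)⟩
  · exact ⟨4, eq_of_01 _ _ (by rw [h0]; decide) (by rw [h1]; decide)⟩
  · exact ⟨5, eq_of_01 _ _ (by rw [h0]; decide) (by rw [h1]; decide)⟩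
  · exact absurd (h0.trans h1.symm) hne

lemma pe_pidx (p : Pref 3) : pe (pidx p) = p := by
  obtain ⟨k, rfl⟩ := exists_pe p
  rw [pidx_pe]

lemma prof_ext (P : Profile 2 3) : P = ![P 0, P 1] := by
  funext i; fin_cases i <;> rfl

lemma exists_prof (P : Profile 2 3) : ∃ a b : Fin 6, P = ![pe a, pe b] := by
  obtain ⟨a, ha⟩ := exists_pe (P 0)
  obtain ⟨b, hb⟩ := exists_pe (P 1)
  exact ⟨a, b, by rw [ha, hb]; exact prof_ext P⟩

lemma update0 (p q p' : Pref 3) : update ![p, q] (0 : Fin 2) p' = ![p', q] := by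
  funext i; fin_cases i <;> simp [update]

lemma update1 (p q q' : Pref 3) : update ![p, q] (1 : Fin 2) q' = ![p, q'] := by
  funext i; fin_cases i <;> simp [update]

end Stmt18
namespace Stmt18

def G (g : Fin 6 → Fin 3) (P : Profile 2 3) : Fin 3 :=
  P 0 (g (pidx ((P 1).trans (P 0).symm)))

def Gi (g : Fin 6 → Fin 3) (a b : Fin 6) : Fin 3 := G g ![pe a, pe b]

lemma neutral_iff (f : Profile 2 3 → Fin 3) : Neutral f ↔ ∃ g, f = G g := by
  constructor
  · intro hN
    refine ⟨fun k => f ![Equiv.refl (Fin 3), pe k], funext fun P => ?_⟩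
    have h := hN ![Equiv.refl (Fin 3), (P 1).trans (P 0).symm] (P 0)
    have h2 : (fun i => ((![Equiv.refl (Fin 3), (P 1).trans (P 0).symm] : Profile 2 3) i).trans (P 0)) = P := by
      funext i; fin_cases i
      · exact Equiv.ext fun x => rfl
      · exact Equiv.ext fun x => (P 0).apply_symm_apply _
    rw [h2] at h
    rw [← h, G, pe_pidx]
  · rintro ⟨g, rfl⟩
    intro P π
    show π (G g P) = _
    have h2 : ((P 1).trans π).trans ((P 0).trans π).symm = (P 1).trans (P 0).symm :=
      Equiv.ext fun x => by simp
    show π (P 0 (g (pidx ((P 1).trans (P 0).symm))))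
      = ((P 0).trans π) (g (pidx (((P 1).trans π).trans ((P 0).trans π).symm)))
    rw [h2]
    rfl

lemma minpos_eq (P : Profile 2 3) (x : Fin 3) :
    minpos P x = min (((P 0).symm x : ℕ)) (((P 1).symm x : ℕ)) := by
  apply le_antisymm
  · exact le_min (ciInf_le (OrderBot.bddBelow _) 0) (ciInf_le (OrderBot.bddBelow _) 1)
  · apply le_ciInf
    intro i; fin_cases i
    · exact min_le_left _ _
    · exact min_le_right _ _

def mpi (a b : Fin 6) (x : Fin 3) : ℕ :=
  min (((pe a).symm x : ℕ)) (((pe b).symm x : ℕ))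

lemma mem_maxmin (a b : Fin 6) (x : Fin 3) :
    x ∈ MaxminSet ![pe a, pe b] ↔ ∀ y, mpi a b y ≤ mpi a b x := by
  simp only [MaxminSet, Set.mem_setOf_eq, minpos_eq]
  rfl

end Stmt18
namespace Stmt18

def NMi (i : Fin 2) (g : Fin 6 → Fin 3) : Prop :=
  ∀ a b : Fin 6,
    (∀ y, mpi a b y ≤ mpi a b (Gi g a b)) ∧
    ∀ y, (∀ z, mpi a b z ≤ mpi a b y) → y ≠ Gi g a b →
      prefers (pe (![a, b] i)) (Gi g a b) y

def Dicti (i : Fin 2) (g : Fin 6 → Fin 3) : Prop :=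
  ∀ a b : Fin 6, IsBest (pe (![a, b] i)) (Gi g a b)

def RFTTi (g : Fin 6 → Fin 3) : Prop :=
  ∀ a b c : Fin 6,
    (prefers (pe a) (Gi g c b) (Gi g a b) →
      ∃ b', Gi g a b' = Gi g a b ∧ prefers (pe a) (Gi g a b') (Gi g c b')) ∧
    (prefers (pe b) (Gi g a c) (Gi g a b) →
      ∃ a', Gi g a' b = Gi g a b ∧ prefers (pe b) (Gi g a' b) (Gi g a' c))

lemma fin2cases : ∀ i : Fin 2, i = 0 ∨ i = 1 := by decide

lemma agent_eq (a b : Fin 6) (i : Fin 2) : (![pe a, pe b] : Profile 2 3) i = pe (![a, b] i) := by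
  rcases fin2cases i with rfl | rfl <;> rfl

lemma NMi_spec {i : Fin 2} {g : Fin 6 → Fin 3} (h : NMi i g) :
    ∀ P : Profile 2 3, G g P ∈ MaxminSet P ∧
      ∀ y ∈ MaxminSet P, y ≠ G g P → prefers (P i) (G g P) y := by
  intro P
  obtain ⟨a, b, rfl⟩ := exists_prof P
  obtain ⟨h1, h2⟩ := h a b
  refine ⟨(mem_maxmin a b _).2 h1, fun y hy hne => ?_⟩
  rw [agent_eq]
  exact h2 y ((mem_maxmin a b y).1 hy) hne

lemma Dicti_spec {i : Fin 2} {g : Fin 6 → Fin 3} (h : Dicti i g) :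
    ∀ P : Profile 2 3, IsBest (P i) (G g P) := by
  intro P
  obtain ⟨a, b, rfl⟩ := exists_prof P
  rw [agent_eq]
  exact h a b

lemma RFTT_iff (g : Fin 6 → Fin 3) : RFTT (G g) ↔ RFTTi g := by
  constructor
  · intro h a b c
    constructor
    · intro hpref
      have hp : prefers ((![pe a, pe b] : Profile 2 3) 0)
          (G g (update ![pe a, pe b] 0 (pe c))) (G g ![pe a, pe b]) := by
        rw [update0]; exact hpref
      obtain ⟨Ps, hs, heq, hpp⟩ := h 0 ![pe a, pe b] (pe c) hp
      have hs' : Ps 0 = pe a := hs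
      have hPs : Ps = ![pe a, pe (pidx (Ps 1))] := by
        rw [pe_pidx]; funext j; rcases fin2cases j with rfl | rfl
        · exact hs'
        · rfl
      have hup : update Ps 0 (pe c) = ![pe c, pe (pidx (Ps 1))] := by
        rw [pe_pidx]; funext j; rcases fin2cases j with rfl | rfl <;> simp [update]
      refine ⟨pidx (Ps 1), ?_, ?_⟩
      · show G g ![pe a, pe (pidx (Ps 1))] = G g ![pe a, pe b]
        rw [← hPs]; exact heq
      · show prefers (pe a) (G g ![pe a, pe (pidx (Ps 1))]) (G g ![pe c, pe (pidx (Ps 1))])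
        rw [← hPs, ← hup]; exact hpp
    · intro hpref
      have hp : prefers ((![pe a, pe b] : Profile 2 3) 1)
          (G g (update ![pe a, pe b] 1 (pe c))) (G g ![pe a, pe b]) := by
        rw [update1]; exact hpref
      obtain ⟨Ps, hs, heq, hpp⟩ := h 1 ![pe a, pe b] (pe c) hp
      have hs' : Ps 1 = pe b := hs
      have hPs : Ps = ![pe (pidx (Ps 0)), pe b] := by
        rw [pe_pidx]; funext j; rcases fin2cases j with rfl | rfl
        · rfl
        · exact hs'
      have hup : update Ps 1 (pe c) = ![pe (pidx (Ps 0)), pe c] := by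
        rw [pe_pidx]; funext j; rcases fin2cases j with rfl | rfl <;> simp [update]
      refine ⟨pidx (Ps 0), ?_, ?_⟩
      · show G g ![pe (pidx (Ps 0)), pe b] = G g ![pe a, pe b]
        rw [← hPs]; exact heq
      · show prefers (pe b) (G g ![pe (pidx (Ps 0)), pe b]) (G g ![pe (pidx (Ps 0)), pe c])
        rw [← hPs, ← hup]; exact hpp
  · intro h i P Pi' hpref
    obtain ⟨a, b, rfl⟩ := exists_prof P
    rcases fin2cases i with rfl | rfl
    · have hpref' : prefers (pe a) (Gi g (pidx Pi') b) (Gi g a b) := by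
        show prefers (pe a) (G g ![pe (pidx Pi'), pe b]) (G g ![pe a, pe b])
        rw [pe_pidx, ← update0 (pe a) (pe b) Pi']
        exact hpref
      obtain ⟨b', hb1, hb2⟩ := (h a b (pidx Pi')).1 hpref'
      refine ⟨![pe a, pe b'], rfl, hb1, ?_⟩
      show prefers (pe a) (G g ![pe a, pe b']) (G g (update ![pe a, pe b'] 0 Pi'))
      rw [update0, ← pe_pidx Pi']
      exact hb2
    · have hpref' : prefers (pe b) (Gi g a (pidx Pi')) (Gi g a b) := by
        show prefers (pe b) (G g ![pe a, pe (pidx Pi')]) (G g ![pe a, pe b])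
        rw [pe_pidx, ← update1 (pe a) (pe b) Pi']
        exact hpref
      obtain ⟨a', ha1, ha2⟩ := (h a b (pidx Pi')).2 hpref'
      refine ⟨![pe a', pe b], rfl, ha1, ?_⟩
      show prefers (pe b) (G g ![pe a', pe b]) (G g (update ![pe a', pe b] 1 Pi'))
      rw [update1, ← pe_pidx Pi']
      exact ha2

end Stmt18
namespace Stmt18

def gnm0 : Fin 6 → Fin 3 := ![2,2,2,2,1,1]
def gnm1 : Fin 6 → Fin 3 := ![2,1,2,2,1,1]
def gd0 : Fin 6 → Fin 3 := ![2,2,2,2,2,2]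
def gd1 : Fin 6 → Fin 3 := ![2,1,2,0,1,0]

lemma nm0 : NMi 0 gnm0 := by unfold NMi; decide
lemma nm1 : NMi 1 gnm1 := by unfold NMi; decide
lemma d0 : Dicti 0 gd0 := by unfold Dicti; decide
lemma d1 : Dicti 1 gd1 := by unfold Dicti; decide
lemma rfnm0 : RFTTi gnm0 := by unfold RFTTi; decide
lemma rfnm1 : RFTTi gnm1 := by unfold RFTTi; decide
lemma rfd0 : RFTTi gd0 := by unfold RFTTi; decide
lemma rfd1 : RFTTi gd1 := by unfold RFTTi; decide

end Stmt18
namespace Stmt18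
set_option maxHeartbeats 4000000 in
set_option maxRecDepth 100000 in
lemma core : ∀ g : Fin 6 → Fin 3, RFTTi g → (∃ i, NMi i g) ∨ (∃ i, Dicti i g) := by
  unfold RFTTi NMi Dicti; decide
end Stmt18
namespace Stmt18

lemma best_unique {p : Pref 3} {x y : Fin 3} (hx : IsBest p x) (hy : IsBest p y) : x = y :=
  p.symm.injective (le_antisymm (hy x) (hx y))

lemma nm_unique (f f' : Profile 2 3 → Fin 3) (i : Fin 2)
    (hf : ∀ P, f P ∈ MaxminSet P ∧ ∀ y ∈ MaxminSet P, y ≠ f P → prefers (P i) (f P) y)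
    (hf' : ∀ P, f' P ∈ MaxminSet P ∧ ∀ y ∈ MaxminSet P, y ≠ f' P → prefers (P i) (f' P) y) :
    f = f' := by
  funext P
  by_contra hne
  have h1 : prefers (P i) (f P) (f' P) := (hf P).2 _ (hf' P).1 (Ne.symm hne)
  have h2 : prefers (P i) (f' P) (f P) := (hf' P).2 _ (hf P).1 hne
  exact lt_asymm h1 h2

lemma dict_unique (f f' : Profile 2 3 → Fin 3) (i : Fin 2)
    (hf : ∀ P, IsBest (P i) (f P)) (hf' : ∀ P, IsBest (P i) (f' P)) : f = f' :=
  funext fun P => best_unique (hf P) (hf' P)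

end Stmt18
/-- Assume n = 2 and m = 3. A voting rule is regret-free truth-telling and
neutral if and only if it is an N-maxmin rule or a dictatorship. -/
theorem stmt_18 (f : Profile 2 3 → Fin 3) :
    (RFTT f ∧ Neutral f) ↔ (NMaxmin f ∨ Dictatorial f) := by
  constructor
  · rintro ⟨hR, hN⟩
    obtain ⟨g, rfl⟩ := (Stmt18.neutral_iff f).1 hN
    rcases Stmt18.core g ((Stmt18.RFTT_iff g).1 hR) with ⟨i, hi⟩ | ⟨i, hi⟩
    · exact Or.inl ⟨i, Stmt18.NMi_spec hi⟩
    · exact Or.inr ⟨i, Stmt18.Dicti_spec hi⟩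
  · rintro (⟨i, hi⟩ | ⟨i, hi⟩)
    · rcases Stmt18.fin2cases i with rfl | rfl
      · have hfeq : f = Stmt18.G Stmt18.gnm0 :=
          Stmt18.nm_unique f _ 0 hi (Stmt18.NMi_spec Stmt18.nm0)
        rw [hfeq]
        exact ⟨(Stmt18.RFTT_iff _).2 Stmt18.rfnm0, (Stmt18.neutral_iff _).2 ⟨_, rfl⟩⟩
      · have hfeq : f = Stmt18.G Stmt18.gnm1 :=
          Stmt18.nm_unique f _ 1 hi (Stmt18.NMi_spec Stmt18.nm1)
        rw [hfeq]
        exact ⟨(Stmt18.RFTT_iff _).2 Stmt18.rfnm1, (Stmt18.neutral_iff _).2 ⟨_, rfl⟩⟩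
    · rcases Stmt18.fin2cases i with rfl | rfl
      · have hfeq : f = Stmt18.G Stmt18.gd0 :=
          Stmt18.dict_unique f _ 0 hi (Stmt18.Dicti_spec Stmt18.d0)
        rw [hfeq]
        exact ⟨(Stmt18.RFTT_iff _).2 Stmt18.rfd0, (Stmt18.neutral_iff _).2 ⟨_, rfl⟩⟩
      · have hfeq : f = Stmt18.G Stmt18.gd1 :=
          Stmt18.dict_unique f _ 1 hi (Stmt18.Dicti_spec Stmt18.d1)
        rw [hfeq]
        exact ⟨(Stmt18.RFTT_iff _).2 Stmt18.rfd1, (Stmt18.neutral_iff _).2 ⟨_, rfl⟩⟩
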